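/- arXiv:1507.05206 — 2 statements merged into one kernel-verified Lean document; each statement's English description precedes it below -/
import Mathlib

section
/- Let C = {x} consist of a single colluding agent. Then: (a) the broadcast β*(x,t) = max(d(x,t) − 2, 1) for t ≠ x is admissible; and (b) every admissible broadcast β for C satisfies β(x,t) ≥ max(d(x,t) − 2, 1) for every t ≠ x. In this sense β* is the optimal (pointwise minimal) admissible strategy for a single lying agent. -/
open SimpleGraph

namespace Intercept

variable {V : Type*}

/-- The perceived-distance vectors after `s` rounds of the synchronization protocol.
Colluding agents (members of `C`) always broadcast `β`; honest agents start with
`0`/`∞` and update by the distance-vector rule. -/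
noncomputable def perceived [Fintype V] [DecidableEq V] (G : SimpleGraph V)
    (C : Finset V) (β : V → V → ℕ∞) : ℕ → V → V → ℕ∞
  | 0 => fun i j => if i ∈ C then β i j else if i = j then 0 else ⊤
  | s + 1 => fun i j =>
      if i ∈ C then β i j
      else min (perceived G C β s i j)
        (1 + ⨅ k ∈ G.neighborSet i, perceived G C β s k j)

/-- The stationary perceived distances `ρ = ρ^n`. -/
noncomputable def rho [Fintype V] [DecidableEq V] (G : SimpleGraph V)
    (C : Finset V) (β : V → V → ℕ∞) : V → V → ℕ∞ :=
  perceived G C β (Fintype.card V)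

/-- `k ∈ b(i,t)`:  `k` is a neighbor of `i` minimizing the (stationary) perceived
distance `ρ(·,t)` among all neighbors of `i`; only defined (satisfiable) for `i ≠ t`. -/
def inForwardSet (G : SimpleGraph V) (ρ : V → V → ℕ∞) (i t k : V) : Prop :=
  i ≠ t ∧ G.Adj i k ∧ ∀ k', G.Adj i k' → ρ k t ≤ ρ k' t

/-- A corresponding path from `s` to `t`: a walk in `G` such that every honest vertex
forwards to a member of its forwarding set `b(·,t)`. -/
def IsCorrPath [Fintype V] [DecidableEq V] (G : SimpleGraph V) (C : Finset V)
    (β : V → V → ℕ∞) (s t : V) (ℓ : ℕ) (v : ℕ → V) : Prop :=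
  v 0 = s ∧ v ℓ = t ∧ (∀ i < ℓ, G.Adj (v i) (v (i + 1))) ∧
    ∀ i < ℓ, v i ∉ C → inForwardSet G (rho G C β) (v i) t (v (i + 1))

/-- A broadcast is admissible if between every ordered pair of distinct vertices
there is a corresponding path. -/
def Admissible [Fintype V] [DecidableEq V] (G : SimpleGraph V) (C : Finset V)
    (β : V → V → ℕ∞) : Prop :=
  ∀ s t : V, s ≠ t → ∃ ℓ v, IsCorrPath G C β s t ℓ v

/-- The pair `(s,t)` is captured if every corresponding path from `s` to `t`
contains a colluding vertex. -/
def Captured [Fintype V] [DecidableEq V] (G : SimpleGraph V) (C : Finset V)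
    (β : V → V → ℕ∞) (s t : V) : Prop :=
  ∀ ℓ v, IsCorrPath G C β s t ℓ v → ∃ i ≤ ℓ, v i ∈ C

/-- `N(C,β)`: the number of captured ordered pairs of distinct vertices. -/
noncomputable def numCaptured [Fintype V] [DecidableEq V] (G : SimpleGraph V)
    (C : Finset V) (β : V → V → ℕ∞) : ℕ :=
  Set.ncard {p : V × V | p.1 ≠ p.2 ∧ Captured G C β p.1 p.2}


/-- The broadcast in which each colluding agent independently lies by two:
`β*(c,t) = max (d(c,t) - 2) 1` for `t ≠ c`, and `β*(c,c) = 0`. -/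
noncomputable def betaStar [DecidableEq V] (G : SimpleGraph V) : V → V → ℕ∞ :=
  fun c t => if c = t then 0 else ((max (G.dist c t - 2) 1 : ℕ) : ℕ∞)

/-!
With a single liar `x` claiming `b = β(x,t)`, the distance-vector iteration stabilises at
`ρ(i,t) = min (d_{G-x}(i,t)) (d(i,x) + b)` for honest `i`: honest agents either route around
`x` or trust its claim. If `d(x,t) ≤ b + 2`, the liar can forward to the successor `k` of a shortest
`x`–`t` path; then `d_{G-x}(k,t) ≤ d(x,t) - 1 ≤ 1 + b`, so `k` routes around `x` and descending
`ρ` from `k` never returns to `x`; every other honest vertex descends `ρ` around or towards `x`.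
If instead `b + 2 < d(x,t)`, every vertex `k ≠ x` within distance two of `x` has
`ρ(k,t) > b = ρ(x,t)`, so an honest neighbour of `x` can only hand the message back to `x`, and a
corresponding path from `x` never leaves the closed neighbourhood of `x`.
-/

lemma edist_le_one_add_of_adj {G : SimpleGraph V} {u v w : V} (h : G.Adj u v) :
    G.edist u w ≤ 1 + G.edist v w := by
  simpa [edist_eq_one_iff_adj.mpr h] using G.edist_triangle (u := u) (v := v) (w := w)

lemma exists_adj_edist_add_one_le {G : SimpleGraph V} {u v : V} (hr : G.Reachable u v)
    (hne : u ≠ v) : ∃ w, G.Adj u w ∧ G.edist w v + 1 ≤ G.edist u v := by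
  obtain ⟨p, hp⟩ := hr.exists_walk_length_eq_edist
  cases p with
  | nil => exact absurd rfl hne
  | cons h q =>
    refine ⟨_, h, ?_⟩
    rw [← hp, Walk.length_cons, Nat.cast_succ]
    gcongr
    exact edist_le q

lemma ne_of_mem_support_deleteIncidenceSet {G : SimpleGraph V} {x u w : V}
    (p : (G.deleteIncidenceSet x).Walk u w) (hu : u ≠ x) : ∀ v ∈ p.support, v ≠ x := by
  induction p with
  | nil => simpa using hu
  | cons h q ih =>
    simp only [Walk.support_cons, List.mem_cons, forall_eq_or_imp]
    exact ⟨hu, ih (deleteIncidenceSet_adj.mp h).2.2⟩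

section CorrPath

variable [Fintype V] [DecidableEq V] {G : SimpleGraph V} {C : Finset V} {β : V → V → ℕ∞}
  {s t : V}

def HasCorrPath (G : SimpleGraph V) (C : Finset V) (β : V → V → ℕ∞) (s t : V) : Prop :=
  ∃ ℓ v, IsCorrPath G C β s t ℓ v

lemma hasCorrPath_self (t : V) : HasCorrPath G C β t t :=
  ⟨0, fun _ => t, rfl, rfl, fun _ h => absurd h (Nat.not_lt_zero _),
    fun _ h => absurd h (Nat.not_lt_zero _)⟩

lemma HasCorrPath.cons {k : V} (hsk : G.Adj s k)
    (hfw : s ∉ C → inForwardSet G (rho G C β) s t k) (h : HasCorrPath G C β k t) :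
    HasCorrPath G C β s t := by
  obtain ⟨ℓ, v, h0, hℓ, hadj, hfwd⟩ := h
  refine ⟨ℓ + 1, fun n => Nat.casesOn n s v, rfl, hℓ, ?_, ?_⟩
  · rintro (_ | i) hi
    · simpa [h0] using hsk
    · exact hadj i (by omega)
  · rintro (_ | i) hi hC
    · simpa [h0] using hfw hC
    · exact hfwd i (by omega) hC

theorem hasCorrPath_of_descent (S : Set V) (φ : V → ℕ∞)
    (hstep : ∀ s ∈ S, s ≠ t → ∃ k, inForwardSet G (rho G C β) s t k ∧
      (HasCorrPath G C β k t ∨ k ∈ S ∧ φ k < φ s)) :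
    ∀ s ∈ S, HasCorrPath G C β s t := by
  intro s
  induction s using (InvImage.wf φ wellFounded_lt).induction with
  | _ s ih =>
    intro hs
    rcases eq_or_ne s t with rfl | hst
    · exact hasCorrPath_self s
    obtain ⟨k, hk, hk'⟩ := hstep s hs hst
    exact .cons hk.2.1 (fun _ => hk) (hk'.elim id fun h => ih k h.2 h.1)

end CorrPath

section Perceived

variable [Fintype V] [DecidableEq V] {G : SimpleGraph V} {C : Finset V} {β : V → V → ℕ∞}
  {i j : V}

lemma perceived_of_mem (hi : i ∈ C) (s : ℕ) : perceived G C β s i j = β i j := by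
  cases s <;> simp [perceived, hi]

lemma perceived_zero_of_notMem (hi : i ∉ C) :
    perceived G C β 0 i j = if i = j then 0 else ⊤ := by
  simp [perceived, hi]

lemma perceived_succ_of_notMem (hi : i ∉ C) (s : ℕ) :
    perceived G C β (s + 1) i j =
      min (perceived G C β s i j) (1 + ⨅ k ∈ G.neighborSet i, perceived G C β s k j) := by
  simp [perceived, hi]

lemma perceived_self_of_notMem (hi : i ∉ C) (s : ℕ) : perceived G C β s i i = 0 := by
  induction s with
  | zero => simp [perceived_zero_of_notMem hi]
  | succ s ih => simp [perceived_succ_of_notMem hi, ih]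

lemma perceived_succ_le_of_adj {k : V} (hi : i ∉ C) (hik : G.Adj i k) (s : ℕ) :
    perceived G C β (s + 1) i j ≤ 1 + perceived G C β s k j := by
  rw [perceived_succ_of_notMem hi]
  exact min_le_of_right_le (by gcongr; exact iInf₂_le k hik)

lemma perceived_add_length_le {H : SimpleGraph V} (hHG : H ≤ G) {w : V} (p : H.Walk i w)
    (hp : ∀ u ∈ p.support, u ≠ w → u ∉ C) (s : ℕ) :
    perceived G C β (s + p.length) i j ≤ p.length + perceived G C β s w j := by
  induction p with
  | nil => simp
  | @cons a b w h q ih =>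
    have ih' := ih fun u hu => hp u (Walk.support_cons h q ▸ List.mem_cons_of_mem a hu)
    by_cases ha : a ∈ C
    · obtain rfl : a = w := by_contra fun haw => hp a (by simp) haw ha
      rw [perceived_of_mem ha, perceived_of_mem ha]
      exact le_add_self
    · calc perceived G C β (s + (q.cons h).length) a j
            = perceived G C β (s + q.length + 1) a j := by rw [Walk.length_cons, add_assoc]
        _ ≤ 1 + perceived G C β (s + q.length) b j := perceived_succ_le_of_adj ha (hHG h) _
        _ ≤ 1 + (q.length + perceived G C β s w j) := by gcongr
        _ = (q.cons h).length + perceived G C β s w j := by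
            rw [Walk.length_cons, Nat.cast_succ]; ring

end Perceived

section SingleLiar

variable [DecidableEq V] {G : SimpleGraph V} {x t i k : V} {b : ℕ∞}

/-- `ρ(·, t)` in closed form when `x` is the only colluder and claims `b`. The vertex `x` is
isolated in `G.deleteIncidenceSet x`, so for `t = x` only the second term counts. -/
noncomputable def rhoSingleton (G : SimpleGraph V) (x t : V) (b : ℕ∞) (i : V) : ℕ∞ :=
  if i = x then b else min ((G.deleteIncidenceSet x).edist i t) (G.edist i x + b)

@[simp]
lemma rhoSingleton_self : rhoSingleton G x t b x = b := by simp [rhoSingleton]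

lemma rhoSingleton_of_ne (hi : i ≠ x) :
    rhoSingleton G x t b i = min ((G.deleteIncidenceSet x).edist i t) (G.edist i x + b) := by
  simp [rhoSingleton, hi]

lemma rhoSingleton_le_edist_add (i : V) : rhoSingleton G x t b i ≤ G.edist i x + b := by
  rcases eq_or_ne i x with rfl | hi
  · simp
  · exact (rhoSingleton_of_ne hi).trans_le (min_le_right _ _)

lemma rhoSingleton_le_edist_deleteIncidenceSet (hi : i ≠ x) :
    rhoSingleton G x t b i ≤ (G.deleteIncidenceSet x).edist i t :=
  (rhoSingleton_of_ne hi).trans_le (min_le_left _ _)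

lemma rhoSingleton_cases (hi : i ≠ x) :
    (G.deleteIncidenceSet x).Reachable i t ∧
        rhoSingleton G x t b i = (G.deleteIncidenceSet x).edist i t ∨
      rhoSingleton G x t b i = G.edist i x + b := by
  rw [rhoSingleton_of_ne hi]
  by_cases hr : (G.deleteIncidenceSet x).Reachable i t
  · rcases min_choice ((G.deleteIncidenceSet x).edist i t) (G.edist i x + b) with h | h
    exacts [.inl ⟨hr, h⟩, .inr h]
  · simp [edist_eq_top_of_not_reachable hr]

lemma rhoSingleton_le_one_add (hi : i ≠ x) (hik : G.Adj i k) :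
    rhoSingleton G x t b i ≤ 1 + rhoSingleton G x t b k := by
  rcases eq_or_ne k x with rfl | hk
  · calc rhoSingleton G k t b i ≤ G.edist i k + b := rhoSingleton_le_edist_add i
      _ = 1 + rhoSingleton G k t b k := by rw [edist_eq_one_iff_adj.mpr hik, rhoSingleton_self]
  · rw [rhoSingleton_of_ne hi, rhoSingleton_of_ne hk, ← min_add_add_left, ← add_assoc]
    exact min_le_min (edist_le_one_add_of_adj (deleteIncidenceSet_adj.mpr ⟨hik, hi, hk⟩))
      (by gcongr; exact edist_le_one_add_of_adj hik)

variable [Fintype V] {β : V → V → ℕ∞}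

lemma rhoSingleton_le_perceived (s : ℕ) (i : V) :
    rhoSingleton G x t (β x t) i ≤ perceived G {x} β s i t := by
  induction s generalizing i with
  | zero =>
    rcases eq_or_ne i x with rfl | hi
    · simp [perceived_of_mem]
    rw [perceived_zero_of_notMem (by simpa using hi)]
    split_ifs with hit
    · subst hit
      exact (rhoSingleton_le_edist_deleteIncidenceSet hi).trans_eq edist_self
    · exact le_top
  | succ s ih =>
    rcases eq_or_ne i x with rfl | hi
    · simp [perceived_of_mem]
    rw [perceived_succ_of_notMem (by simpa using hi)]
    refine le_min (ih i) ?_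
    simp only [ENat.add_iInf]
    exact le_iInf₂ fun k hk => (rhoSingleton_le_one_add hi hk).trans (by gcongr; exact ih k)

lemma perceived_card_le_rhoSingleton (i : V) :
    perceived G {x} β (Fintype.card V) i t ≤ rhoSingleton G x t (β x t) i := by
  rcases eq_or_ne i x with rfl | hi
  · simp [perceived_of_mem]
  rw [rhoSingleton_of_ne hi]
  refine le_min ?_ ?_
  · by_cases hr : (G.deleteIncidenceSet x).Reachable i t
    · obtain ⟨p, hp, hl⟩ := hr.exists_path_of_dist
      have hav := ne_of_mem_support_deleteIncidenceSet p hi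
      have h := perceived_add_length_le (C := {x}) (β := β) (j := t) (deleteIncidenceSet_le G x)
        p (fun u hu _ => by simpa using hav u hu) (Fintype.card V - p.length)
      rwa [Nat.sub_add_cancel hp.length_lt.le,
        perceived_self_of_notMem (by simpa using hav t p.end_mem_support), add_zero, hl,
        hr.coe_dist_eq_edist] at h
    · simp [edist_eq_top_of_not_reachable hr]
  · by_cases hr : G.Reachable i x
    · obtain ⟨p, hp, hl⟩ := hr.exists_path_of_dist
      have h := perceived_add_length_le (C := {x}) (β := β) (j := t) le_rfl
        p (fun u _ hux => by simpa using hux) (Fintype.card V - p.length)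
      rwa [Nat.sub_add_cancel hp.length_lt.le, perceived_of_mem (Finset.mem_singleton_self x),
        hl, hr.coe_dist_eq_edist] at h
    · simp [edist_eq_top_of_not_reachable hr]

theorem rho_singleton_eq (i : V) : rho G {x} β i t = rhoSingleton G x t (β x t) i :=
  (perceived_card_le_rhoSingleton i).antisymm (rhoSingleton_le_perceived _ i)

lemma inForwardSet_of_rhoSingleton_add_one_le (hi : i ≠ x) (hit : i ≠ t) (hik : G.Adj i k)
    (h : rhoSingleton G x t (β x t) k + 1 ≤ rhoSingleton G x t (β x t) i) :
    inForwardSet G (rho G {x} β) i t k := by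
  refine ⟨hit, hik, fun k' hk' => ?_⟩
  rw [rho_singleton_eq, rho_singleton_eq, ← ENat.add_le_add_iff_right ENat.one_ne_top]
  exact h.trans ((rhoSingleton_le_one_add hi hk').trans_eq (add_comm _ _))

end SingleLiar

section Admissibility

variable [Fintype V] [DecidableEq V] {G : SimpleGraph V} {x t i : V} {β : V → V → ℕ∞}

lemma exists_inForwardSet_of_rhoSingleton_eq_edist (hi : i ≠ x) (hit : i ≠ t)
    (hr : (G.deleteIncidenceSet x).Reachable i t)
    (hg : rhoSingleton G x t (β x t) i = (G.deleteIncidenceSet x).edist i t) :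
    ∃ k, inForwardSet G (rho G {x} β) i t k ∧
      (k ≠ x ∧ (G.deleteIncidenceSet x).Reachable k t ∧
        rhoSingleton G x t (β x t) k = (G.deleteIncidenceSet x).edist k t) ∧
      (G.deleteIncidenceSet x).edist k t < (G.deleteIncidenceSet x).edist i t := by
  obtain ⟨k, hik, hk⟩ := exists_adj_edist_add_one_le hr hit
  obtain ⟨hik, -, hkx⟩ := deleteIncidenceSet_adj.mp hik
  have hkt : (G.deleteIncidenceSet x).edist k t ≠ ⊤ := by
    intro h
    rw [h, top_add, top_le_iff] at hk
    exact edist_ne_top_iff_reachable.mpr hr hk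
  have hgk := rhoSingleton_le_edist_deleteIncidenceSet (G := G) (b := β x t) (t := t) hkx
  have hfw : rhoSingleton G x t (β x t) k + 1 ≤ rhoSingleton G x t (β x t) i := by
    rw [hg]; exact (add_le_add_left hgk 1).trans hk
  refine ⟨k, inForwardSet_of_rhoSingleton_add_one_le hi hit hik hfw,
    ⟨hkx, reachable_of_edist_ne_top hkt, hgk.antisymm ?_⟩, (ENat.add_one_le_iff hkt).mp hk⟩
  rw [← ENat.add_le_add_iff_right ENat.one_ne_top]
  exact hk.trans (hg.symm.trans_le ((rhoSingleton_le_one_add hi hik).trans_eq (add_comm _ _)))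

lemma hasCorrPath_of_rhoSingleton_eq_edist (hi : i ≠ x)
    (hr : (G.deleteIncidenceSet x).Reachable i t)
    (hg : rhoSingleton G x t (β x t) i = (G.deleteIncidenceSet x).edist i t) :
    HasCorrPath G {x} β i t := by
  refine hasCorrPath_of_descent {k | k ≠ x ∧ (G.deleteIncidenceSet x).Reachable k t ∧
      rhoSingleton G x t (β x t) k = (G.deleteIncidenceSet x).edist k t}
    ((G.deleteIncidenceSet x).edist · t) (fun s ⟨hs, hsr, hsg⟩ hst => ?_) i ⟨hi, hr, hg⟩
  obtain ⟨k, hk, hkS, hlt⟩ := exists_inForwardSet_of_rhoSingleton_eq_edist hs hst hsr hsg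
  exact ⟨k, hk, .inr ⟨hkS, hlt⟩⟩

lemma hasCorrPath_liar_of_dist_le (hG : G.Connected) (htx : t ≠ x)
    (hβ : (G.dist x t : ℕ∞) ≤ β x t + 2) : HasCorrPath G {x} β x t := by
  obtain ⟨p, hp, hl⟩ := hG.exists_path_of_dist x t
  cases p with
  | nil => exact absurd rfl htx
  | @cons _ k _ hxk q =>
    have hxq : x ∉ q.support := ((Walk.cons_isPath_iff hxk q).mp hp).2
    let q' : (G.deleteIncidenceSet x).Walk k t := q.toDeleteEdges _
      fun e he hinc => hxq (Walk.mem_support_of_mem_edges he hinc.2)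
    have hq' : (G.deleteIncidenceSet x).edist k t ≤ q.length :=
      (edist_le q').trans_eq (congrArg _ (Walk.length_transfer _ _))
    have hkx : k ≠ x := hxk.ne.symm
    refine .cons hxk (fun h => absurd (Finset.mem_singleton_self x) h)
      (hasCorrPath_of_rhoSingleton_eq_edist hkx (reachable_of_edist_ne_top
        (ne_top_of_le_ne_top (ENat.natCast_ne_top _) hq')) ?_)
    refine (rhoSingleton_le_edist_deleteIncidenceSet hkx).antisymm ?_
    rw [rhoSingleton_of_ne hkx, edist_eq_one_iff_adj.mpr hxk.symm]
    refine le_min le_rfl (hq'.trans ?_)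
    rw [← ENat.add_le_add_iff_right ENat.one_ne_top, add_comm 1, add_assoc, one_add_one_eq_two]
    rw [← hl, Walk.length_cons] at hβ
    exact_mod_cast hβ

lemma exists_inForwardSet_toward_liar (hG : G.Connected) (hi : i ≠ x)
    (hit : i ≠ t) (hg : rhoSingleton G x t (β x t) i = G.edist i x + β x t) :
    ∃ k, inForwardSet G (rho G {x} β) i t k ∧ G.edist k x < G.edist i x := by
  obtain ⟨k, hik, hk⟩ := exists_adj_edist_add_one_le (hG i x) hi
  have hkx : G.edist k x ≠ ⊤ := edist_ne_top_iff_reachable.mpr (hG k x)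
  refine ⟨k, inForwardSet_of_rhoSingleton_add_one_le hi hit hik ?_,
    (ENat.add_one_le_iff hkx).mp hk⟩
  calc rhoSingleton G x t (β x t) k + 1 ≤ G.edist k x + β x t + 1 := by
        gcongr; exact rhoSingleton_le_edist_add k
    _ = G.edist k x + 1 + β x t := add_right_comm _ _ _
    _ ≤ rhoSingleton G x t (β x t) i := by rw [hg]; gcongr

theorem admissible_singleton_of_dist_le (hG : G.Connected)
    (hdist : ∀ t, t ≠ x → (G.dist x t : ℕ∞) ≤ β x t + 2) : Admissible G {x} β := by
  intro s t hst
  have hx : HasCorrPath G {x} β x t := by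
    rcases eq_or_ne t x with rfl | htx
    exacts [hasCorrPath_self t, hasCorrPath_liar_of_dist_le hG htx (hdist t htx)]
  rcases eq_or_ne s x with rfl | hs
  · exact hx
  refine hasCorrPath_of_descent {i | i ≠ x} (G.edist · x) (fun i hi hit => ?_) s hs
  rcases rhoSingleton_cases (b := β x t) hi with ⟨hr, hg⟩ | hg
  · obtain ⟨k, hk, ⟨hkx, hkr, hkg⟩, -⟩ :=
      exists_inForwardSet_of_rhoSingleton_eq_edist hi hit hr hg
    exact ⟨k, hk, .inl (hasCorrPath_of_rhoSingleton_eq_edist hkx hkr hkg)⟩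
  · obtain ⟨k, hk, hlt⟩ := exists_inForwardSet_toward_liar hG hi hit hg
    rcases eq_or_ne k x with rfl | hkx
    exacts [⟨k, hk, .inl hx⟩, ⟨k, hk, .inr ⟨hkx, hlt⟩⟩]

lemma eq_of_adj_of_inForwardSet {k : V} (hxi : G.Adj x i)
    (hk : inForwardSet G (rho G {x} β) i t k) (hd : β x t + 2 < G.edist x t) : k = x := by
  by_contra hkx
  have hle := hk.2.2 x hxi.symm
  rw [rho_singleton_eq, rho_singleton_eq, rhoSingleton_self, rhoSingleton_of_ne hkx] at hle
  have hβ : β x t ≠ ⊤ := fun h => by simp [h] at hd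
  have hxk : G.edist x k ≤ 2 :=
    (edist_le_one_add_of_adj hxi).trans (by rw [edist_eq_one_iff_adj.mpr hk.2.1]; rfl)
  have hkt : β x t < G.edist k t := by
    rw [← ENat.add_lt_add_iff_left (k := 2) (by simp), add_comm 2]
    exact hd.trans_le (G.edist_triangle.trans (by gcongr))
  have hkx' : β x t < G.edist k x + β x t :=
    ((ENat.lt_add_one_iff hβ).mpr le_rfl).trans_le (by
      rw [add_comm]; gcongr; exact Order.one_le_iff_pos.mpr (edist_pos_of_ne hkx))
  exact (lt_min (hkt.trans_le (edist_anti (deleteIncidenceSet_le G x))) hkx').not_ge hle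

lemma edist_le_of_isCorrPath_liar {ℓ : ℕ} {v : ℕ → V} (h : IsCorrPath G {x} β x t ℓ v) :
    G.edist x t ≤ β x t + 2 := by
  obtain ⟨h0, hℓ, hadj, hfw⟩ := h
  by_contra! hd
  have hnear : ∀ j ≤ ℓ, v j = x ∨ G.Adj x (v j) := by
    intro j
    induction j with
    | zero => exact fun _ => .inl h0
    | succ j ih =>
      intro hj
      rcases ih (by omega) with hvj | hvj
      · exact .inr (hvj ▸ hadj j (by omega))
      · exact .inl <| eq_of_adj_of_inForwardSet hvj
          (hfw j (by omega) (by simpa using hvj.ne.symm)) hd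
  have ht : G.edist x t ≤ 1 := by
    rw [edist_le_one_iff_adj_or_eq, ← hℓ]
    exact (hnear ℓ le_rfl).symm.imp id Eq.symm
  exact absurd (hd.trans_le ht) (by simp)

lemma dist_le_of_admissible (h : Admissible G {x} β) (ht : t ≠ x) :
    (G.dist x t : ℕ∞) ≤ β x t + 2 :=
  have ⟨_, _, hv⟩ := h x t ht.symm
  (ENat.natCast_toNat_le_self _).trans (edist_le_of_isCorrPath_liar hv)

end Admissibility

theorem single_agent_optimal_general [Fintype V] [DecidableEq V] (G : SimpleGraph V)
    (hG : G.Connected) (x : V) :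
    Admissible G {x} (betaStar G) ∧
      ∀ β : V → V → ℕ∞, β x x = 0 → (∀ t : V, t ≠ x → 1 ≤ β x t) →
        Admissible G {x} β →
        ∀ t : V, t ≠ x → ((max (G.dist x t - 2) 1 : ℕ) : ℕ∞) ≤ β x t := by
  refine ⟨admissible_singleton_of_dist_le hG fun t ht => ?_, fun β _ hβ hadm t ht => ?_⟩
  · simp only [betaStar, if_neg ht.symm]
    norm_cast
    omega
  · rw [Nat.mono_cast.map_max]
    refine max_le ?_ (hβ t ht)
    rw [ENat.natCast_sub, Nat.cast_ofNat, tsub_le_iff_right]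
    exact dist_le_of_admissible hadm ht

/-- For a single colluding agent `x`: (a) the broadcast
`β*(x,t) = max (d(x,t) - 2) 1` is admissible, and (b) every admissible broadcast `β`
for `{x}` satisfies `β x t ≥ max (d(x,t) - 2) 1` for every `t ≠ x`; so `β*` is the
pointwise minimal (optimal) admissible strategy for a single lying agent. -/
theorem single_agent_optimal [Fintype V] [DecidableEq V] (G : SimpleGraph V)
    (hG : G.Connected) (hn : 2 ≤ Fintype.card V) (x : V) :
    Admissible G {x} (betaStar G) ∧
      ∀ β : V → V → ℕ∞, β x x = 0 → (∀ t : V, t ≠ x → 1 ≤ β x t) →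
        Admissible G {x} β →
        ∀ t : V, t ≠ x → ((max (G.dist x t - 2) 1 : ℕ) : ℕ∞) ≤ β x t :=
  single_agent_optimal_general G hG x


end Intercept
end

section
/- If a colluding agent x ∈ C is proper for a target t with forwarding number j ≥ 2, and σ(1) = x, σ(2), …, σ(j) is a witness for x (for target t), then the colluding agent σ(2) has forwarding number j − 1 for t. -/
open SimpleGraph

namespace Intercept

variable {V : Type*}

/-- The `j`-th colluding distance `d_j(x,y)`: the least total length of a sequence of
`j` distinct colluding vertices starting at `x` and ending at `y`, measured by summing
the graph distances of consecutive members (`⊤` if no such sequence exists). -/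
noncomputable def collDist (G : SimpleGraph V) (C : Finset V) (j : ℕ) (x y : V) : ℕ∞ :=
  ⨅ (σ : ℕ → V) (_ : σ 0 = x ∧ σ (j - 1) = y ∧ (∀ i < j, σ i ∈ C) ∧
      ∀ a < j, ∀ b < j, σ a = σ b → a = b),
    ∑ i ∈ Finset.range (j - 1), (G.dist (σ i) (σ (i + 1)) : ℕ∞)

/-- `ρ'(x,t) = max (d(x,t) - 2) 1`. -/
noncomputable def rhoPrime (G : SimpleGraph V) (x t : V) : ℕ∞ :=
  max ((G.dist x t : ℕ∞) - 2) 1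

/-- `ρ''(x,t)`: the minimum over colluders `y` and `1 ≤ j ≤ |C|` of
`d_j(x,y) - 2(j-1) + ρ'(y,t)`. -/
noncomputable def rhoPrime2 (G : SimpleGraph V) (C : Finset V) (x t : V) : ℕ∞ :=
  ⨅ y ∈ C, ⨅ j ∈ Finset.Icc 1 C.card,
    (collDist G C j x y - ((2 * (j - 1) : ℕ) : ℕ∞) + rhoPrime G y t)

/-- The optimal separated broadcast `ρ*(x,t) = min (ρ'(x,t)) (ρ''(x,t))`,
with `ρ*(x,x) = 0`. -/
noncomputable def rhoStar [DecidableEq V] (G : SimpleGraph V) (C : Finset V)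
    (x t : V) : ℕ∞ :=
  if x = t then 0 else min (rhoPrime G x t) (rhoPrime2 G C x t)

/-- A colluder `x` is proper for target `t` if `ρ*(x,t) < ρ'(x,t)`. -/
def Proper [DecidableEq V] (G : SimpleGraph V) (C : Finset V) (x t : V) : Prop :=
  rhoStar G C x t < rhoPrime G x t

open scoped Classical in
/-- The forwarding number of `x` for `t`: the least `j ≥ 1` such that
`ρ*(x,t) = d_j(x,y) - 2(j-1) + ρ'(y,t)` for some colluder `y`, improper
vertices being assigned forwarding number `1`. -/
noncomputable def fwdNum [DecidableEq V] (G : SimpleGraph V) (C : Finset V)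
    (x t : V) : ℕ :=
  if Proper G C x t then
    sInf {j : ℕ | 1 ≤ j ∧ ∃ y ∈ C, rhoStar G C x t =
      collDist G C j x y - ((2 * (j - 1) : ℕ) : ℕ∞) + rhoPrime G y t}
  else 1

/-! A shortest witness for `x` passes through `z = σ 1` at cost `d(x,z)`, so `ρ*(z,t)` is at most
`ρ*(x,t) - (d(x,z) - 2)`. Conversely, any optimal route for `z` of length `m` becomes a route for
`x` of length at most `m + 1` costing at most `d(x,z) - 2` more: prepend `x`, or, if `x` already
occurs on it, keep only the part after `x` (every hop between colluders costs at least `2`).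
Hence the two bounds are equalities, and the minimality of the forwarding number of `x` forces
that of `z` to be `j - 1`. -/

theorem exists_eq_biInf_of_ne_top {ι α : Type*} [CompleteLinearOrder α] [WellFoundedLT α]
    {p : ι → Prop} {f : ι → α} (h : ⨅ i, ⨅ (_ : p i), f i ≠ ⊤) :
    ∃ i, p i ∧ f i = ⨅ i, ⨅ (_ : p i), f i := by
  rw [iInf_subtype'] at h ⊢
  have : Nonempty (Subtype p) := by
    by_contra hp
    exact h (@iInf_of_empty _ _ _ (not_nonempty_iff.mp hp) _)
  obtain ⟨⟨i, hi⟩, hmin⟩ := ciInf_mem fun i : Subtype p => f i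
  exact ⟨i, hi, hmin⟩

theorem two_le_dist_of_not_adj {G : SimpleGraph V} (hG : G.Connected) {u v : V} (huv : u ≠ v)
    (hadj : ¬ G.Adj u v) : 2 ≤ G.dist u v := by
  have h0 : 0 < G.dist u v := hG.pos_dist_of_ne huv
  have h1 : G.dist u v ≠ 1 := fun h => hadj (dist_eq_one_iff_adj.mp h)
  omega

/-- The sequences over which `collDist G C j x y` is minimized. -/
def IsColludingSeq (C : Finset V) (j : ℕ) (x y : V) (σ : ℕ → V) : Prop :=
  σ 0 = x ∧ σ (j - 1) = y ∧ (∀ i < j, σ i ∈ C) ∧ ∀ a < j, ∀ b < j, σ a = σ b → a = b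

noncomputable def seqLength (G : SimpleGraph V) (j : ℕ) (σ : ℕ → V) : ℕ :=
  ∑ i ∈ Finset.range (j - 1), G.dist (σ i) (σ (i + 1))

/-- The term minimized in `ρ''(x,t)`. -/
noncomputable def routeValue (G : SimpleGraph V) (C : Finset V) (j : ℕ) (x y t : V) : ℕ∞ :=
  collDist G C j x y - ((2 * (j - 1) : ℕ) : ℕ∞) + rhoPrime G y t

namespace IsColludingSeq

variable {C : Finset V} {j : ℕ} {x y : V} {σ : ℕ → V}

theorem card_le (hσ : IsColludingSeq C j x y σ) : j ≤ C.card := by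
  classical
  simpa using Finset.card_le_card_of_injOn (s := Finset.range j) σ
    (fun i hi => hσ.2.2.1 i (Finset.mem_range.mp hi))
    (fun a ha b hb hab => hσ.2.2.2 a (Finset.mem_range.mp ha) b (Finset.mem_range.mp hb) hab)

theorem drop (hσ : IsColludingSeq C j x y σ) {p : ℕ} (hp : p < j) :
    IsColludingSeq C (j - p) (σ p) y (fun i => σ (p + i)) := by
  refine ⟨rfl, ?_, fun i hi => hσ.2.2.1 (p + i) (by omega), fun a ha b hb hab => ?_⟩
  · show σ (p + (j - p - 1)) = y
    rw [← hσ.2.1, show p + (j - p - 1) = j - 1 by omega]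
  · have := hσ.2.2.2 (p + a) (by omega) (p + b) (by omega) hab
    omega

theorem cons (hσ : IsColludingSeq C j x y σ) (hj : 1 ≤ j) {u : V} (hu : u ∈ C)
    (hnot : ∀ i < j, σ i ≠ u) :
    IsColludingSeq C (j + 1) u y (fun | 0 => u | i + 1 => σ i) := by
  obtain ⟨k, rfl⟩ : ∃ k, j = k + 1 := ⟨j - 1, by omega⟩
  refine ⟨rfl, hσ.2.1, fun i hi => ?_, fun a ha b hb hab => ?_⟩
  · cases i with
    | zero => exact hu
    | succ i => exact hσ.2.2.1 i (by omega)
  · cases a <;> cases b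
    · rfl
    · exact absurd hab.symm (hnot _ (by omega))
    · exact absurd hab (hnot _ (by omega))
    · simpa using hσ.2.2.2 _ (by omega) _ (by omega) hab

variable {G : SimpleGraph V}

theorem two_le_dist (hG : G.Connected) (hsep : ∀ a ∈ C, ∀ b ∈ C, ¬ G.Adj a b)
    (hσ : IsColludingSeq C j x y σ) {a b : ℕ} (ha : a < j) (hb : b < j) (hab : a ≠ b) :
    2 ≤ G.dist (σ a) (σ b) :=
  two_le_dist_of_not_adj hG (fun h => hab (hσ.2.2.2 a ha b hb h))
    (hsep _ (hσ.2.2.1 a ha) _ (hσ.2.2.1 b hb))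

theorem two_mul_le_sum (hG : G.Connected) (hsep : ∀ a ∈ C, ∀ b ∈ C, ¬ G.Adj a b)
    (hσ : IsColludingSeq C j x y σ) {p : ℕ} (hp : p ≤ j - 1) :
    2 * p ≤ ∑ i ∈ Finset.range p, G.dist (σ i) (σ (i + 1)) := by
  calc 2 * p = ∑ _i ∈ Finset.range p, 2 := by simp [mul_comm]
    _ ≤ _ := Finset.sum_le_sum fun i hi => by
        rw [Finset.mem_range] at hi
        exact hσ.two_le_dist hG hsep (by omega) (by omega) (by omega)

theorem two_mul_le_seqLength (hG : G.Connected) (hsep : ∀ a ∈ C, ∀ b ∈ C, ¬ G.Adj a b)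
    (hσ : IsColludingSeq C j x y σ) : 2 * (j - 1) ≤ seqLength G j σ :=
  hσ.two_mul_le_sum hG hsep le_rfl

theorem collDist_le (hσ : IsColludingSeq C j x y σ) :
    collDist G C j x y ≤ seqLength G j σ := by
  rw [seqLength, Nat.cast_sum]
  exact iInf₂_le σ hσ

end IsColludingSeq

theorem seqLength_eq_add_drop (G : SimpleGraph V) {j p : ℕ} (σ : ℕ → V) (hp : p < j) :
    seqLength G j σ = ∑ i ∈ Finset.range p, G.dist (σ i) (σ (i + 1))
      + seqLength G (j - p) (fun i => σ (p + i)) := by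
  rw [seqLength, seqLength, show j - 1 = p + (j - p - 1) by omega, Finset.sum_range_add]
  rfl

theorem seqLength_cons (G : SimpleGraph V) {j : ℕ} (hj : 1 ≤ j) (u : V) (σ : ℕ → V) :
    seqLength G (j + 1) (fun | 0 => u | i + 1 => σ i) = G.dist u (σ 0) + seqLength G j σ := by
  obtain ⟨k, rfl⟩ : ∃ k, j = k + 1 := ⟨j - 1, by omega⟩
  rw [seqLength, seqLength, Nat.add_sub_cancel, Finset.sum_range_succ', add_comm]
  rfl

section collDist

variable {G : SimpleGraph V} {C : Finset V} {j : ℕ} {x y : V}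

theorem exists_isColludingSeq_of_collDist_ne_top (h : collDist G C j x y ≠ ⊤) :
    ∃ σ, IsColludingSeq C j x y σ ∧ collDist G C j x y = seqLength G j σ := by
  obtain ⟨σ, hσ, hmin⟩ := exists_eq_biInf_of_ne_top h
  exact ⟨σ, hσ, by rw [collDist, ← hmin, seqLength, Nat.cast_sum]⟩

theorem collDist_eq_top_of_card_lt (h : C.card < j) : collDist G C j x y = ⊤ :=
  iInf₂_eq_top.mpr fun _ hσ => absurd (IsColludingSeq.card_le hσ) (not_le.mpr h)

theorem collDist_one_self (hx : x ∈ C) : collDist G C 1 x x = 0 := by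
  have hσ : IsColludingSeq C 1 x x fun _ => x :=
    ⟨rfl, rfl, fun _ _ => hx, fun _ _ _ _ _ => by omega⟩
  simpa [seqLength] using hσ.collDist_le (G := G)

end collDist

section routeValue

variable {G : SimpleGraph V} {C : Finset V} {j : ℕ} {x y t : V}

theorem rhoPrime_eq_natCast (G : SimpleGraph V) (x t : V) :
    rhoPrime G x t = ((max (G.dist x t - 2) 1 : ℕ) : ℕ∞) := by
  rw [rhoPrime, Nat.mono_cast.map_max, ENat.natCast_sub, Nat.cast_one, Nat.cast_ofNat]

theorem rhoPrime_le_add_one (G : SimpleGraph V) (x t : V) :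
    rhoPrime G x t ≤ ((G.dist x t - 2 : ℕ) : ℕ∞) + 1 := by
  rw [rhoPrime_eq_natCast]
  exact_mod_cast max_le (Nat.le_succ _) (Nat.le_add_left _ _)

theorem one_le_routeValue : 1 ≤ routeValue G C j x y t :=
  (le_max_right _ _).trans le_add_self

theorem routeValue_eq_of_collDist_eq {c : ℕ} (h : collDist G C j x y = c) :
    routeValue G C j x y t = ((c - 2 * (j - 1) : ℕ) : ℕ∞) + rhoPrime G y t := by
  rw [routeValue, h, ENat.natCast_sub]

theorem routeValue_le_of_collDist_le {c : ℕ} (h : collDist G C j x y ≤ c) :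
    routeValue G C j x y t ≤ ((c - 2 * (j - 1) : ℕ) : ℕ∞) + rhoPrime G y t := by
  rw [routeValue, ENat.natCast_sub]
  gcongr

theorem routeValue_one_self (hx : x ∈ C) : routeValue G C 1 x x t = rhoPrime G x t := by
  simp [routeValue, collDist_one_self hx]

theorem exists_routeValue_eq_rhoPrime2 (h : rhoPrime2 G C x t ≠ ⊤) :
    ∃ y ∈ C, ∃ j, 1 ≤ j ∧ rhoPrime2 G C x t = routeValue G C j x y t := by
  obtain ⟨y, hy, hmin⟩ := exists_eq_biInf_of_ne_top h
  obtain ⟨j, hj, hjmin⟩ := exists_eq_biInf_of_ne_top (hmin.trans_ne h)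
  exact ⟨y, hy, j, (Finset.mem_Icc.mp hj).1, hmin.symm.trans hjmin.symm⟩

end routeValue

section rhoStar

variable [DecidableEq V] {G : SimpleGraph V} {C : Finset V} {j : ℕ} {x y t : V}

theorem rhoStar_self : rhoStar G C x x = 0 := if_pos rfl

theorem rhoStar_le_rhoPrime (hxt : x ≠ t) : rhoStar G C x t ≤ rhoPrime G x t := by
  rw [rhoStar, if_neg hxt]
  exact min_le_left _ _

theorem rhoStar_le_routeValue (hxt : x ≠ t) (hy : y ∈ C) (hj : 1 ≤ j) :
    rhoStar G C x t ≤ routeValue G C j x y t := by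
  by_cases hjC : j ≤ C.card
  · rw [rhoStar, if_neg hxt]
    exact (min_le_right _ _).trans <|
      (iInf₂_le y hy).trans (iInf₂_le j (Finset.mem_Icc.mpr ⟨hj, hjC⟩))
  · rw [routeValue, collDist_eq_top_of_card_lt (not_le.mp hjC), ENat.top_sub_natCast, top_add]
    exact le_top

theorem fwdNum_le (hj : 1 ≤ j) (hy : y ∈ C) (h : rhoStar G C x t = routeValue G C j x y t) :
    fwdNum G C x t ≤ j := by
  rw [fwdNum]
  split_ifs
  · exact Nat.sInf_le ⟨hj, y, hy, h⟩
  · exact hj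

/-- For an improper `x` the attaining route is the trivial one, `y = x`. -/
theorem exists_rhoStar_eq_routeValue_fwdNum (hx : x ∈ C) (hxt : x ≠ t) :
    1 ≤ fwdNum G C x t ∧ ∃ y ∈ C, rhoStar G C x t = routeValue G C (fwdNum G C x t) x y t := by
  by_cases hp : Proper G C x t
  · have hlt : rhoStar G C x t < rhoPrime G x t := hp
    have h2 : rhoStar G C x t = rhoPrime2 G C x t := by
      rw [rhoStar, if_neg hxt] at hlt ⊢
      exact min_eq_right (not_le.mp fun h => hlt.ne (min_eq_left h)).le
    obtain ⟨y, hy, j, hj, hjy⟩ := exists_routeValue_eq_rhoPrime2 (h2 ▸ hlt.ne_top)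
    have hmem := Nat.sInf_mem (⟨j, hj, y, hy, h2.trans hjy⟩ :
      {j : ℕ | 1 ≤ j ∧ ∃ y ∈ C, rhoStar G C x t = routeValue G C j x y t}.Nonempty)
    rw [fwdNum, if_pos hp]
    exact hmem
  · rw [fwdNum, if_neg hp]
    refine ⟨le_rfl, x, hx, ?_⟩
    rw [routeValue_one_self hx]
    exact le_antisymm (rhoStar_le_rhoPrime hxt) (not_lt.mp hp)

end rhoStar

section Witness

variable {G : SimpleGraph V} {C : Finset V}

theorem IsColludingSeq.routeValue_tail_le (hG : G.Connected)
    (hsep : ∀ a ∈ C, ∀ b ∈ C, ¬ G.Adj a b) {j : ℕ} {x y t : V} {σ : ℕ → V}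
    (hσ : IsColludingSeq C j x y σ) (hj : 2 ≤ j) (hmin : collDist G C j x y = seqLength G j σ) :
    ((G.dist x (σ 1) - 2 : ℕ) : ℕ∞) + routeValue G C (j - 1) (σ 1) y t
      ≤ routeValue G C j x y t := by
  have htail := hσ.drop (p := 1) (by omega)
  have hD := hσ.two_le_dist hG hsep (a := 0) (b := 1) (by omega) (by omega) (by omega)
  have hT := htail.two_mul_le_seqLength hG hsep
  have hsplit := seqLength_eq_add_drop G σ (j := j) (p := 1) (by omega)
  rw [Finset.sum_range_one, zero_add] at hsplit
  rw [hσ.1] at hD hsplit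
  set T := seqLength G (j - 1) fun i => σ (1 + i)
  have hnat : G.dist x (σ 1) - 2 + (T - 2 * (j - 1 - 1)) ≤ seqLength G j σ - 2 * (j - 1) := by
    omega
  calc ((G.dist x (σ 1) - 2 : ℕ) : ℕ∞) + routeValue G C (j - 1) (σ 1) y t
      ≤ ((G.dist x (σ 1) - 2 : ℕ) : ℕ∞)
          + (((T - 2 * (j - 1 - 1) : ℕ) : ℕ∞) + rhoPrime G y t) := by
        gcongr
        exact routeValue_le_of_collDist_le htail.collDist_le
    _ ≤ ((seqLength G j σ - 2 * (j - 1) : ℕ) : ℕ∞) + rhoPrime G y t := by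
        rw [← add_assoc]
        gcongr
        exact_mod_cast hnat
    _ = routeValue G C j x y t := (routeValue_eq_of_collDist_eq hmin).symm

theorem exists_routeValue_le_add (hG : G.Connected) (hsep : ∀ a ∈ C, ∀ b ∈ C, ¬ G.Adj a b)
    {x z : V} (hx : x ∈ C) (hxz : x ≠ z) {m : ℕ} (hm : 1 ≤ m) (y t : V) :
    ∃ n, 1 ≤ n ∧ n ≤ m + 1 ∧
      routeValue G C n x y t ≤ ((G.dist x z - 2 : ℕ) : ℕ∞) + routeValue G C m z y t := by
  by_cases htop : collDist G C m z y = ⊤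
  · refine ⟨1, le_rfl, by omega, ?_⟩
    simp only [routeValue, htop, ENat.top_sub_natCast, top_add, add_top, le_top]
  obtain ⟨τ, hτ, hc⟩ := exists_isColludingSeq_of_collDist_ne_top htop
  have hc2 := hτ.two_mul_le_seqLength hG hsep
  rw [routeValue_eq_of_collDist_eq hc, ← add_assoc]
  by_cases hmem : ∃ p < m, τ p = x
  · obtain ⟨p, hpm, rfl⟩ := hmem
    have hp : p ≠ 0 := by rintro rfl; exact hxz hτ.1
    have hsplit := seqLength_eq_add_drop G τ hpm
    have hpre := hτ.two_mul_le_sum hG hsep (p := p) (by omega)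
    refine ⟨m - p, by omega, by omega,
      (routeValue_le_of_collDist_le (hτ.drop hpm).collDist_le).trans ?_⟩
    gcongr
    exact_mod_cast (show _ ≤ _ by omega)
  · push Not at hmem
    have hD : 2 ≤ G.dist x z :=
      two_le_dist_of_not_adj hG hxz (hsep _ hx _ (hτ.1 ▸ hτ.2.2.1 0 hm))
    have hcons := seqLength_cons G hm x τ
    rw [hτ.1] at hcons
    refine ⟨m + 1, by omega, le_rfl,
      (routeValue_le_of_collDist_le (hτ.cons hm hx hmem).collDist_le).trans ?_⟩
    gcongr
    exact_mod_cast (show _ ≤ _ by omega)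

end Witness

theorem witness_forwarding_number_general [DecidableEq V] (G : SimpleGraph V)
    (hG : G.Connected) (C : Finset V)
    (hsep : ∀ x ∈ C, ∀ y ∈ C, ¬ G.Adj x y)
    (x : V) (hx : x ∈ C) (t : V)
    (hproper : Proper G C x t)
    (j : ℕ) (hj2 : 2 ≤ j) (hjfwd : fwdNum G C x t = j)
    (σ : ℕ → V) (y : V) (hy : y ∈ C)
    (hσ0 : σ 0 = x) (hσlast : σ (j - 1) = y)
    (hσC : ∀ i < j, σ i ∈ C)
    (hσinj : ∀ a < j, ∀ b < j, σ a = σ b → a = b)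
    (hσmin : (∑ i ∈ Finset.range (j - 1), (G.dist (σ i) (σ (i + 1)) : ℕ∞))
      = collDist G C j x y)
    (hattain : rhoStar G C x t
      = collDist G C j x y - ((2 * (j - 1) : ℕ) : ℕ∞) + rhoPrime G y t) :
    fwdNum G C (σ 1) t = j - 1 := by
  have hσ : IsColludingSeq C j x y σ := ⟨hσ0, hσlast, hσC, hσinj⟩
  have hz : σ 1 ∈ C := hσC 1 (by omega)
  have hxz : x ≠ σ 1 := fun h => by
    have := hσinj 0 (by omega) 1 (by omega) (hσ0.trans h)
    omega
  have htail : ((G.dist x (σ 1) - 2 : ℕ) : ℕ∞) + routeValue G C (j - 1) (σ 1) y t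
      ≤ rhoStar G C x t :=
    hattain ▸ hσ.routeValue_tail_le hG hsep hj2 (by rw [← hσmin, seqLength, Nat.cast_sum])
  have hxt : x ≠ t := by
    rintro rfl
    simpa [rhoStar_self] using one_le_routeValue.trans (le_add_self.trans htail)
  have hzt : σ 1 ≠ t := by
    rintro hzt
    rw [hzt] at htail
    exact (((add_le_add le_rfl one_le_routeValue).trans htail).trans_lt hproper).not_ge
      (rhoPrime_le_add_one G x t)
  obtain ⟨hm, w, hw, hzw⟩ := exists_rhoStar_eq_routeValue_fwdNum (G := G) hz hzt
  obtain ⟨n, hn, hnm, hxn⟩ := exists_routeValue_le_add hG hsep hx hxz hm w t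
  have hxw : routeValue G C n x w t
      ≤ ((G.dist x (σ 1) - 2 : ℕ) : ℕ∞) + rhoStar G C (σ 1) t := by rwa [hzw]
  have hzy := rhoStar_le_routeValue (G := G) hzt hy (j := j - 1) (by omega)
  have hxn' : rhoStar G C x t = routeValue G C n x w t :=
    le_antisymm (rhoStar_le_routeValue hxt hw hn) (hxw.trans ((add_le_add le_rfl hzy).trans htail))
  have hyz : routeValue G C (j - 1) (σ 1) y t ≤ rhoStar G C (σ 1) t :=
    (ENat.add_le_add_iff_left (ENat.natCast_ne_top _)).mp (htail.trans (hxn'.trans_le hxw))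
  have hjn : j ≤ n := hjfwd ▸ fwdNum_le hn hw hxn'
  have hzj : fwdNum G C (σ 1) t ≤ j - 1 := fwdNum_le (by omega) hy (le_antisymm hzy hyz)
  omega

/-- If a colluding agent `x ∈ C` is proper for a target `t` with
forwarding number `j ≥ 2`, and `σ 0 = x, σ 1, …, σ (j-1) = y` is a witness for `x`
(an injective sequence of colluders attaining `d_j(x,y)` with
`ρ*(x,t) = d_j(x,y) - 2(j-1) + ρ'(y,t)`), then the colluding agent `σ 1` has
forwarding number `j - 1` for `t`. -/
theorem witness_forwarding_number [Fintype V] [DecidableEq V] (G : SimpleGraph V)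
    (hG : G.Connected) (C : Finset V)
    (hsep : ∀ x ∈ C, ∀ y ∈ C, ¬ G.Adj x y)
    (x : V) (hx : x ∈ C) (t : V)
    (hproper : Proper G C x t)
    (j : ℕ) (hj2 : 2 ≤ j) (hjfwd : fwdNum G C x t = j)
    (σ : ℕ → V) (y : V) (hy : y ∈ C)
    (hσ0 : σ 0 = x) (hσlast : σ (j - 1) = y)
    (hσC : ∀ i < j, σ i ∈ C)
    (hσinj : ∀ a < j, ∀ b < j, σ a = σ b → a = b)
    (hσmin : (∑ i ∈ Finset.range (j - 1), (G.dist (σ i) (σ (i + 1)) : ℕ∞))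
      = collDist G C j x y)
    (hattain : rhoStar G C x t
      = collDist G C j x y - ((2 * (j - 1) : ℕ) : ℕ∞) + rhoPrime G y t) :
    fwdNum G C (σ 1) t = j - 1 :=
  witness_forwarding_number_general G hG C hsep x hx t hproper j hj2 hjfwd σ y hy hσ0 hσlast hσC
    hσinj hσmin hattain

end Intercept
end
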